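/- For h : {-1,1}^E → {0,1} (E finite) and any subset G ⊆ E, ∑_{S : ∅ ≠ S ⊆ G} ĥ(S)² ≤ 4 · P[Piv_G(h)]², where Piv_G(h) is the event that h can be changed by modifying coordinates only inside G. -/

import Mathlib

/-! For `S ⊆ G`, `ĥ(S)` is the average over `ω` of the coefficient `ĥ_ω(S)` of the restriction
of `h` to the fibre of `ω` (the configurations agreeing with `ω` off `G`). For `S ≠ ∅` this
coefficient vanishes unless `h` is non-constant on the fibre, i.e. unless `ω ∈ Piv_G(h)`, so
Cauchy–Schwarz against the indicator of `Piv_G(h)` gives `ĥ(S)² ≤ P[Piv] · E[1_Piv ĥ_ω(S)²]`.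
Summing over `S` and using Parseval on each fibre, where the nonempty spectral mass of a
`{0,1}`-valued function is its variance `p(1 - p) ≤ 1/4`, bounds the total by `P[Piv]² / 4`. -/

open Finset
open scoped Classical

noncomputable section

/-- Expectation with respect to the uniform product measure on `{-1,1}^E`. -/
def cubeExp {E : Type*} [Fintype E] [DecidableEq E] (f : (E → Bool) → ℝ) : ℝ :=
  (∑ ω : E → Bool, f ω) / 2 ^ Fintype.card E

/-- The Walsh character `χ_S(ω) = ∏_{i ∈ S} ω(i)` (with `true ↦ +1`, `false ↦ -1`). -/
def walsh {E : Type*} (S : Finset E) (ω : E → Bool) : ℝ :=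
  ∏ i ∈ S, (if ω i then (1 : ℝ) else -1)

/-- The Fourier–Walsh coefficient `ĥ(S) = E[h χ_S]`. -/
def walshCoeff {E : Type*} [Fintype E] [DecidableEq E]
    (h : (E → Bool) → ℝ) (S : Finset E) : ℝ :=
  cubeExp (fun ω => h ω * walsh S ω)

/-- Probability (under the uniform measure) of a set of configurations. -/
def probOf {E : Type*} [Fintype E] [DecidableEq E] (A : (E → Bool) → Prop) : ℝ :=
  cubeExp (fun ω => if A ω then 1 else 0)

/-- `Piv_G(h)`: the event that `h` can be changed by modifying coordinates only inside `G`. -/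
def pivotal {E : Type*} (G : Finset E) (h : (E → Bool) → ℝ) (ω : E → Bool) : Prop :=
  ∃ ω' : E → Bool, (∀ i, i ∉ G → ω' i = ω i) ∧ h ω' ≠ h ω

theorem walsh_piecewise_of_subset {E : Type*} [DecidableEq E] {S G : Finset E} (hSG : S ⊆ G)
    (x ω : E → Bool) : walsh S (G.piecewise x ω) = walsh S x :=
  Finset.prod_congr rfl fun i hi => by rw [G.piecewise_eq_of_mem _ _ (hSG hi)]

section

variable {E : Type*} [Fintype E] [DecidableEq E]

theorem cubeExp_mono {f g : (E → Bool) → ℝ} (hfg : ∀ ω, f ω ≤ g ω) : cubeExp f ≤ cubeExp g := by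
  unfold cubeExp
  gcongr with ω
  exact hfg ω

theorem cubeExp_sum {ι : Type*} (s : Finset ι) (F : ι → (E → Bool) → ℝ) :
    cubeExp (fun ω => ∑ i ∈ s, F i ω) = ∑ i ∈ s, cubeExp (F i) := by
  simp only [cubeExp, Finset.sum_comm (s := s), Finset.sum_div]

theorem cubeExp_const_mul (c : ℝ) (f : (E → Bool) → ℝ) :
    cubeExp (fun ω => c * f ω) = c * cubeExp f := by
  simp only [cubeExp, ← Finset.mul_sum, mul_div_assoc]

theorem probOf_nonneg (A : (E → Bool) → Prop) : 0 ≤ probOf A := by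
  unfold probOf cubeExp
  positivity

theorem cubeExp_sq_le_probOf_mul {A : (E → Bool) → Prop} {F : (E → Bool) → ℝ}
    (hF : ∀ ω, ¬ A ω → F ω = 0) :
    cubeExp F ^ 2 ≤ probOf A * cubeExp (fun ω => F ω ^ 2) := by
  have hCS : (∑ ω, F ω) ^ 2 ≤ (∑ ω, if A ω then (1 : ℝ) else 0) * ∑ ω, F ω ^ 2 := by
    refine Finset.sum_sq_le_sum_mul_sum_of_sq_le_mul _ (fun ω _ => by positivity)
      (fun ω _ => sq_nonneg _) fun ω _ => ?_
    by_cases hA : A ω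
    · simp [hA]
    · simp [hA, hF ω hA]
  simp only [probOf, cubeExp, div_pow, div_mul_div_comm, ← sq]
  gcongr

theorem cubeExp_cubeExp_piecewise (G : Finset E) (F : (E → Bool) → ℝ) :
    cubeExp (fun ω => cubeExp (fun x => F (G.piecewise x ω))) = cubeExp F := by
  let swapOn : (E → Bool) × (E → Bool) → (E → Bool) × (E → Bool) :=
    fun p => (G.piecewise p.2 p.1, G.piecewise p.1 p.2)
  have hswap : Function.Involutive swapOn := fun p => by
    ext i <;> by_cases hi : i ∈ G <;> simp [swapOn, hi]
  have hdouble : ∑ ω, ∑ x, F (G.piecewise x ω) = 2 ^ Fintype.card E * ∑ ω, F ω := by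
    calc ∑ ω, ∑ x, F (G.piecewise x ω)
        = ∑ p : (E → Bool) × (E → Bool), F (G.piecewise (swapOn p).2 (swapOn p).1) := by
          rw [hswap.bijective.sum_comp (fun p => F (G.piecewise p.2 p.1)),
            Fintype.sum_prod_type]
      _ = ∑ p : (E → Bool) × (E → Bool), F p.1 := by
          congr! 2 with p
          ext i
          by_cases hi : i ∈ G <;> simp [swapOn, hi]
      _ = 2 ^ Fintype.card E * ∑ ω, F ω := by
          simp [Fintype.sum_prod_type, Finset.mul_sum, mul_comm]
  have hN : (2 : ℝ) ^ Fintype.card E ≠ 0 := by positivity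
  simp only [cubeExp, ← Finset.sum_div, hdouble]
  field_simp

theorem sum_walsh_eq_zero {S : Finset E} (hS : S ≠ ∅) : ∑ x : E → Bool, walsh S x = 0 := by
  obtain ⟨i, hi⟩ := Finset.nonempty_iff_ne_empty.mpr hS
  have hfactor : ∑ x : E → Bool, walsh S x
      = ∏ j, ∑ b : Bool, if j ∈ S then (if b then (1 : ℝ) else -1) else 1 := by
    rw [Fintype.prod_sum]
    refine Finset.sum_congr rfl fun x _ => ?_
    rw [walsh, Finset.prod_ite_mem, Finset.univ_inter]
  rw [hfactor]
  exact Finset.prod_eq_zero (Finset.mem_univ i) (by simp [hi])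

theorem sum_walsh_mul_walsh (x y : E → Bool) :
    ∑ S : Finset E, walsh S x * walsh S y
      = if x = y then (2 : ℝ) ^ Fintype.card E else 0 := by
  have hfactor : ∑ S : Finset E, walsh S x * walsh S y
      = ∏ i, ((if x i then (1 : ℝ) else -1) * (if y i then 1 else -1) + 1) := by
    simp only [Fintype.prod_add, Finset.prod_const_one, mul_one, walsh, Finset.prod_mul_distrib]
  rw [hfactor]
  split_ifs with hxy
  · subst hxy
    rw [← Finset.card_univ, ← Finset.prod_const]
    exact Finset.prod_congr rfl fun i _ => by cases x i <;> norm_num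
  · obtain ⟨i, hi⟩ := Function.ne_iff.mp hxy
    refine Finset.prod_eq_zero (Finset.mem_univ i) ?_
    revert hi
    cases x i <;> cases y i <;> norm_num

theorem walshCoeff_empty (f : (E → Bool) → ℝ) : walshCoeff f ∅ = cubeExp f := by
  simp [walshCoeff, walsh]

theorem walshCoeff_const_eq_zero (c : ℝ) {S : Finset E} (hS : S ≠ ∅) :
    walshCoeff (fun _ => c) S = 0 := by
  simp only [walshCoeff, cubeExp]
  rw [← Finset.mul_sum, sum_walsh_eq_zero hS, mul_zero, zero_div]

theorem sum_walshCoeff_sq (f : (E → Bool) → ℝ) :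
    ∑ S : Finset E, walshCoeff f S ^ 2 = cubeExp (fun ω => f ω ^ 2) := by
  have hexpand : ∑ S : Finset E, (∑ x, f x * walsh S x) ^ 2
      = 2 ^ Fintype.card E * ∑ x, f x ^ 2 := by
    calc ∑ S : Finset E, (∑ x, f x * walsh S x) ^ 2
        = ∑ x, ∑ y, f x * f y * ∑ S : Finset E, walsh S x * walsh S y := by
          simp only [Finset.mul_sum]
          refine .trans ?_
            (Finset.sum_comm.trans (Finset.sum_congr rfl fun x _ => Finset.sum_comm))
          refine Finset.sum_congr rfl fun S _ => ?_
          rw [sq, Finset.sum_mul_sum]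
          exact Finset.sum_congr rfl fun x _ => Finset.sum_congr rfl fun y _ => by ring
      _ = 2 ^ Fintype.card E * ∑ x, f x ^ 2 := by
          simp [sum_walsh_mul_walsh, Finset.mul_sum, sq, mul_comm]
  have hN : (2 : ℝ) ^ Fintype.card E ≠ 0 := by positivity
  simp only [walshCoeff, cubeExp, div_pow, ← Finset.sum_div, hexpand]
  field_simp

theorem sum_walshCoeff_sq_le_variance (f : (E → Bool) → ℝ) {T : Finset (Finset E)}
    (hT : ∅ ∉ T) :
    ∑ S ∈ T, walshCoeff f S ^ 2 ≤ cubeExp (fun ω => f ω ^ 2) - cubeExp f ^ 2 := by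
  calc ∑ S ∈ T, walshCoeff f S ^ 2
      ≤ ∑ S ∈ Finset.univ.erase ∅, walshCoeff f S ^ 2 :=
        Finset.sum_le_sum_of_subset_of_nonneg
          (fun S hS => Finset.mem_erase.mpr ⟨ne_of_mem_of_not_mem hS hT, Finset.mem_univ S⟩)
          fun _ _ _ => sq_nonneg _
    _ = cubeExp (fun ω => f ω ^ 2) - cubeExp f ^ 2 := by
        rw [← sum_walshCoeff_sq, ← walshCoeff_empty,
          ← Finset.add_sum_erase _ _ (Finset.mem_univ ∅), add_sub_cancel_left]

theorem sum_walshCoeff_sq_le_one_div_four {f : (E → Bool) → ℝ} (hf : ∀ ω, f ω = 0 ∨ f ω = 1)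
    {T : Finset (Finset E)} (hT : ∅ ∉ T) :
    ∑ S ∈ T, walshCoeff f S ^ 2 ≤ 1 / 4 := by
  have hsq : cubeExp (fun ω => f ω ^ 2) = cubeExp f :=
    congrArg cubeExp (funext fun ω => by rcases hf ω with h | h <;> simp [h])
  nlinarith [sum_walshCoeff_sq_le_variance f hT, sq_nonneg (cubeExp f - 1 / 2)]

/-- `ĥ_ω(S)`: the Walsh coefficient of `h` restricted to the fibre of configurations that agree
with `ω` off `G`. -/
def fiberWalshCoeff (G : Finset E) (h : (E → Bool) → ℝ) (ω : E → Bool) (S : Finset E) : ℝ :=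
  walshCoeff (fun x => h (G.piecewise x ω)) S

theorem walshCoeff_eq_cubeExp_fiberWalshCoeff (h : (E → Bool) → ℝ) {S G : Finset E}
    (hSG : S ⊆ G) : walshCoeff h S = cubeExp (fun ω => fiberWalshCoeff G h ω S) := by
  simpa [walshCoeff, fiberWalshCoeff, walsh_piecewise_of_subset hSG] using
    (cubeExp_cubeExp_piecewise G fun σ => h σ * walsh S σ).symm

theorem fiberWalshCoeff_eq_zero_of_not_pivotal {G : Finset E} {h : (E → Bool) → ℝ}
    {ω : E → Bool} (hω : ¬ pivotal G h ω) {S : Finset E} (hS : S ≠ ∅) :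
    fiberWalshCoeff G h ω S = 0 := by
  have hconst : (fun x => h (G.piecewise x ω)) = fun _ => h ω := funext fun x => by
    by_contra hne
    exact hω ⟨_, fun i hi => G.piecewise_eq_of_notMem _ _ hi, hne⟩
  rw [fiberWalshCoeff, hconst, walshCoeff_const_eq_zero _ hS]

theorem sum_fiberWalshCoeff_sq_le {h : (E → Bool) → ℝ} (h01 : ∀ ω, h ω = 0 ∨ h ω = 1)
    (G : Finset E) {T : Finset (Finset E)} (hT : ∅ ∉ T) (ω : E → Bool) :
    ∑ S ∈ T, fiberWalshCoeff G h ω S ^ 2 ≤ 1 / 4 * if pivotal G h ω then 1 else 0 := by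
  by_cases hω : pivotal G h ω
  · simpa [hω, fiberWalshCoeff] using
      sum_walshCoeff_sq_le_one_div_four (fun x => h01 (G.piecewise x ω)) hT
  · simp only [hω, if_false, mul_zero]
    exact (Finset.sum_eq_zero fun S hS => by
      rw [fiberWalshCoeff_eq_zero_of_not_pivotal hω (ne_of_mem_of_not_mem hS hT),
        sq, mul_zero]).le

end

/-- The spectral mass of the nonempty sets contained in `G` is at most `4 P[Piv_G(h)]²`. -/
theorem spectral_mass_subset_le_pivotal_sq {E : Type*} [Fintype E] [DecidableEq E]
    (h : (E → Bool) → ℝ) (h01 : ∀ ω, h ω = 0 ∨ h ω = 1) (G : Finset E) :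
    ∑ S ∈ Finset.univ.filter (fun S : Finset E => S ≠ ∅ ∧ S ⊆ G),
        walshCoeff h S ^ 2
      ≤ 4 * probOf (pivotal G h) ^ 2 := by
  set T := Finset.univ.filter (fun S : Finset E => S ≠ ∅ ∧ S ⊆ G)
  have hT : ∅ ∉ T := by simp [T]
  set P := probOf (pivotal G h)
  calc ∑ S ∈ T, walshCoeff h S ^ 2
      = ∑ S ∈ T, cubeExp (fun ω => fiberWalshCoeff G h ω S) ^ 2 :=
        Finset.sum_congr rfl fun S hS => by
          rw [walshCoeff_eq_cubeExp_fiberWalshCoeff h (Finset.mem_filter.mp hS).2.2]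
    _ ≤ ∑ S ∈ T, P * cubeExp (fun ω => fiberWalshCoeff G h ω S ^ 2) :=
        Finset.sum_le_sum fun S hS => cubeExp_sq_le_probOf_mul fun _ hω =>
          fiberWalshCoeff_eq_zero_of_not_pivotal hω (ne_of_mem_of_not_mem hS hT)
    _ = P * cubeExp (fun ω => ∑ S ∈ T, fiberWalshCoeff G h ω S ^ 2) := by
        rw [← Finset.mul_sum, cubeExp_sum]
    _ ≤ P * cubeExp (fun ω => 1 / 4 * if pivotal G h ω then 1 else 0) :=
        mul_le_mul_of_nonneg_left (cubeExp_mono (sum_fiberWalshCoeff_sq_le h01 G hT))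
          (probOf_nonneg _)
    _ = P ^ 2 / 4 := by
        rw [cubeExp_const_mul]
        change P * (1 / 4 * P) = _
        ring
    _ ≤ 4 * P ^ 2 := by nlinarith [sq_nonneg P]
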